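/- arXiv:2507.13024 — 2 statements merged into one kernel-verified Lean document; each statement's English description precedes it below -/
import Mathlib

section
/- Let (Ω, F, P) be a probability space, V : Ω → ℝ^k a measurable random vector, f : ℝ^k → ℝ a measurable function, and W : Ω → ℝ a random variable independent of V with W distributed as a Gaussian with mean m and variance s² > 0. Then, P-almost surely, the conditional expectation of Φ(f(V) + W) given the σ-algebra generated by V equals Φ((f(V) + m)/√(1 + s²)). -/
open MeasureTheory ProbabilityTheory Real
open scoped NNReal

/-- The standard normal CDF `Φ(t) = (2π)^{-1/2} ∫_{-∞}^t e^{-s²/2} ds`. -/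
noncomputable def stdNormalCDF (t : ℝ) : ℝ :=
  ∫ s in Set.Iic t, Real.exp (-s ^ 2 / 2) / Real.sqrt (2 * Real.pi)

/-!
Conditioning on `V` freezes `f V`, and since `W` is independent of `V` the conditional
expectation is `a ↦ 𝔼[Φ(a + W)]` evaluated at `a = f V`. Writing `Φ(a + w) = ℙ(Z + (-w) ≤ a)`
with `Z ~ N(0, 1)` independent of `W`, this is the CDF at `a` of the convolution
`N(-m, s²) ∗ N(0, 1) = N(-m, 1 + s²)`.
-/

lemma stdNormalCDF_eq_cdf : stdNormalCDF = cdf (gaussianReal 0 1) := by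
  ext t
  rw [cdf_eq_real, measureReal_def, gaussianReal_apply_eq_integral 0 one_ne_zero,
    ENNReal.toReal_ofReal (integral_nonneg fun _ => gaussianPDFReal_nonneg _ _ _)]
  refine setIntegral_congr_fun measurableSet_Iic fun s _ => ?_
  simp [gaussianPDFReal, div_eq_mul_inv, mul_comm]

lemma cdf_gaussianReal (μ : ℝ) {v : ℝ≥0} (hv : v ≠ 0) (x : ℝ) :
    cdf (gaussianReal μ v) x = cdf (gaussianReal 0 1) ((x - μ) / √v) := by
  have hsqrt : 0 < √(v : ℝ) := Real.sqrt_pos.mpr (by positivity)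
  have hmap : (gaussianReal 0 1).map (fun z => μ + √v * z) = gaussianReal μ v := by
    rw [show (fun z => μ + √v * z) = (μ + ·) ∘ (√v * ·) from rfl,
      ← Measure.map_map (measurable_const_add μ) (measurable_const_mul _),
      gaussianReal_map_const_mul, gaussianReal_map_const_add]
    congr 1
    · ring
    · ext; simp [Real.sq_sqrt v.coe_nonneg]
  have hpre : (fun z => μ + √v * z) ⁻¹' Set.Iic x = Set.Iic ((x - μ) / √v) := by
    ext z
    simp only [Set.mem_preimage, Set.mem_Iic, le_div_iff₀ hsqrt]
    constructor <;> intro h <;> linarith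
  rw [cdf_eq_real, cdf_eq_real, ← hmap, measureReal_def, measureReal_def,
    Measure.map_apply (by fun_prop) measurableSet_Iic, hpre]

lemma integral_cdf_sub_eq_cdf_conv (μ ν : Measure ℝ) [IsProbabilityMeasure μ]
    [IsProbabilityMeasure ν] (a : ℝ) : ∫ y, cdf μ (a - y) ∂ν = cdf (ν ∗ μ) a := by
  have hpre (y : ℝ) :
      Prod.mk y ⁻¹' ((fun p : ℝ × ℝ => p.1 + p.2) ⁻¹' Set.Iic a) = Set.Iic (a - y) := by
    ext z; simp [le_sub_iff_add_le']
  have hconv : (ν ∗ μ) (Set.Iic a) = ∫⁻ y, μ (Set.Iic (a - y)) ∂ν := by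
    rw [Measure.conv, Measure.map_apply measurable_add measurableSet_Iic,
      Measure.prod_apply (measurable_add measurableSet_Iic)]
    simp_rw [hpre]
  have hmeas : Measurable fun y => μ (Set.Iic (a - y)) := by
    simpa only [hpre] using
      measurable_measure_prodMk_left (ν := μ) (measurable_add (measurableSet_Iic (a := a)))
  simp_rw [cdf_eq_real, measureReal_def]
  rw [hconv, integral_toReal hmeas.aemeasurable (ae_of_all _ fun _ => measure_lt_top _ _)]

lemma integral_cdf_gaussianReal_add (m : ℝ) (s2 : ℝ≥0) (a : ℝ) :
    ∫ w, cdf (gaussianReal 0 1) (a + w) ∂gaussianReal m s2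
      = cdf (gaussianReal 0 1) ((a + m) / √(1 + (s2 : ℝ))) := by
  calc ∫ w, cdf (gaussianReal 0 1) (a + w) ∂gaussianReal m s2
      = ∫ y, cdf (gaussianReal 0 1) (a - y) ∂gaussianReal (-m) s2 := by
        rw [← gaussianReal_map_neg, integral_map (f := fun y => cdf (gaussianReal 0 1) (a - y))
          measurable_neg.aemeasurable
          ((cdf _).mono.measurable.comp (measurable_const_sub a)).aestronglyMeasurable]
        simp_rw [sub_neg_eq_add]
    _ = cdf (gaussianReal (-m + 0) (s2 + 1)) a := by
        rw [integral_cdf_sub_eq_cdf_conv, gaussianReal_conv_gaussianReal]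
    _ = _ := by
        rw [cdf_gaussianReal _ (by positivity), add_comm (s2 : ℝ≥0) 1]
        simp

theorem condExp_prodMk_ae_eq_integral_of_indepFun {α β γ F : Type*} {mα : MeasurableSpace α}
    {mβ : MeasurableSpace β} [MeasurableSpace γ] [StandardBorelSpace γ] [Nonempty γ]
    [NormedAddCommGroup F] [NormedSpace ℝ F] [CompleteSpace F]
    {μ : Measure α} [IsFiniteMeasure μ] {X : α → β} {Y : α → γ} {f : β × γ → F}
    (hX : Measurable X) (hY : AEMeasurable Y μ) (hXY : IndepFun X Y μ) (hf : StronglyMeasurable f)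
    (hf_int : Integrable (fun a => f (X a, Y a)) μ) :
    μ[fun a => f (X a, Y a) | mβ.comap X] =ᵐ[μ] fun a => ∫ y, f (X a, y) ∂μ.map Y := by
  have hκ : condDistrib Y X μ =ᵐ[μ.map X] Kernel.const β (μ.map Y) := by
    refine condDistrib_ae_eq_of_measure_eq_compProd X hY ?_
    rw [Measure.compProd_const]
    exact (indepFun_iff_map_prod_eq_prod_map_map hX.aemeasurable hY).mp hXY
  filter_upwards [condExp_prod_ae_eq_integral_condDistrib hX hY hf hf_int,
    ae_of_ae_map hX.aemeasurable hκ] with a hcond hconst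
  rw [hcond, hconst, Kernel.const_apply]

theorem probit_condexp_general {Ω : Type*} [MeasurableSpace Ω]
    (P : Measure Ω) [IsProbabilityMeasure P] (k : ℕ)
    (V : Ω → (Fin k → ℝ)) (hV : Measurable V)
    (f : (Fin k → ℝ) → ℝ) (hf : Measurable f)
    (W : Ω → ℝ) (hW : Measurable W)
    (hindep : IndepFun V W P)
    (m : ℝ) (s2 : ℝ≥0)
    (hWdist : P.map W = gaussianReal m s2) :
    ∀ᵐ ω ∂P,
      (P[fun ω => stdNormalCDF (f (V ω) + W ω) |
          MeasurableSpace.comap V inferInstance]) ω =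
        stdNormalCDF ((f (V ω) + m) / Real.sqrt (1 + (s2 : ℝ))) := by
  have hΦ : Measurable stdNormalCDF := stdNormalCDF_eq_cdf ▸ (cdf _).mono.measurable
  have hprobit : Measurable fun p : (Fin k → ℝ) × ℝ => stdNormalCDF (f p.1 + p.2) :=
    hΦ.comp ((hf.comp measurable_fst).add measurable_snd)
  have hint : Integrable (fun ω => stdNormalCDF (f (V ω) + W ω)) P := by
    refine .of_bound (hprobit.comp (hV.prodMk hW)).aestronglyMeasurable 1
      (ae_of_all _ fun ω => ?_)
    rw [stdNormalCDF_eq_cdf, Real.norm_of_nonneg (cdf_nonneg _ _)]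
    exact cdf_le_one _ _
  filter_upwards [condExp_prodMk_ae_eq_integral_of_indepFun hV hW.aemeasurable hindep
    hprobit.stronglyMeasurable hint] with ω hω
  rw [hω, hWdist, stdNormalCDF_eq_cdf, integral_cdf_gaussianReal_add]

/-- Core mechanism of Theorem 1: if `W ~ N(m, s²)` with `s² > 0` is independent of the
random vector `V`, then a.s.
`E[Φ(f(V) + W) | σ(V)] = Φ((f(V) + m)/√(1 + s²))`. -/
theorem probit_condexp {Ω : Type*} [MeasurableSpace Ω]
    (P : Measure Ω) [IsProbabilityMeasure P] (k : ℕ)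
    (V : Ω → (Fin k → ℝ)) (hV : Measurable V)
    (f : (Fin k → ℝ) → ℝ) (hf : Measurable f)
    (W : Ω → ℝ) (hW : Measurable W)
    (hindep : IndepFun V W P)
    (m : ℝ) (s2 : ℝ≥0) (hs2 : 0 < s2)
    (hWdist : P.map W = gaussianReal m s2) :
    ∀ᵐ ω ∂P,
      (P[fun ω => stdNormalCDF (f (V ω) + W ω) |
          MeasurableSpace.comap V inferInstance]) ω =
        stdNormalCDF ((f (V ω) + m) / Real.sqrt (1 + (s2 : ℝ))) :=
  probit_condexp_general P k V hV f hf W hW hindep m s2 hWdist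
end

section
/- Let X₁ be a real random variable Gaussian with mean μ₁ and variance σ₁² (σ₁ > 0), let ρ ∈ [−1, 1], σ₂ ≥ 0, μ₂ ∈ ℝ, and let W be independent of X₁ and Gaussian with mean 0 and variance (1 − ρ²)σ₂² > 0. Define X₂ := μ₂ + ρ·(σ₂/σ₁)·(X₁ − μ₁) + W, so that (X₁, X₂) is a bivariate Gaussian vector with correlation ρ. Then for all β₀, β₁, β₂ ∈ ℝ, almost surely, the conditional expectation of Φ(β₀ + β₁X₁ + β₂X₂) given the σ-algebra generated by X₁ equals Φ((α₀ + α₁X₁)/√(1 + β₂²(1 − ρ²)σ₂²)), where α₀ = β₀ + β₂μ₂ − β₂ρ(σ₂/σ₁)μ₁ and α₁ = β₁ + β₂ρσ₂/σ₁. -/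
/-!
Given `X₁`, the argument `β₀ + β₁X₁ + β₂X₂` equals `α₀ + α₁X₁ + β₂W` with `W ~ N(0, v)`
independent of `X₁`, so the conditional expectation is the Gaussian average of
`w ↦ Φ(a + β₂w)` at `a = α₀ + α₁X₁`. Writing `Φ(a - u) = ℙ(Z ≤ a - u)` with `Z ~ N(0, 1)`, this
average is `ℙ(Z + U ≤ a)` for an independent `U ~ N(0, β₂²v)`, and `Z + U ~ N(0, 1 + β₂²v)`
because variances add under convolution of Gaussians.
-/

open MeasureTheory ProbabilityTheory Real
open scoped NNReal

open Set

theorem stdNormalCDF_eq_measureReal (t : ℝ) :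
    stdNormalCDF t = (gaussianReal 0 1).real (Iic t) := by
  have hpdf : ∀ s, gaussianPDFReal 0 1 s = Real.exp (-s ^ 2 / 2) / Real.sqrt (2 * π) := by
    intro s
    simp only [gaussianPDFReal, NNReal.coe_one, mul_one, sub_zero]
    ring
  rw [measureReal_def, gaussianReal_apply_eq_integral 0 one_ne_zero, ENNReal.toReal_ofReal
    (setIntegral_nonneg measurableSet_Iic fun s _ => gaussianPDFReal_nonneg 0 1 s), stdNormalCDF]
  simp_rw [hpdf]

theorem monotone_stdNormalCDF : Monotone stdNormalCDF := fun s t hst => by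
  simp only [stdNormalCDF_eq_measureReal]
  exact measureReal_mono (Iic_subset_Iic.2 hst)

@[fun_prop]
theorem measurable_stdNormalCDF : Measurable stdNormalCDF :=
  monotone_stdNormalCDF.measurable

theorem abs_stdNormalCDF_le_one (t : ℝ) : |stdNormalCDF t| ≤ 1 := by
  rw [stdNormalCDF_eq_measureReal, abs_of_nonneg measureReal_nonneg]
  exact measureReal_le_one

theorem gaussianReal_measureReal_Iic {v : ℝ≥0} (hv : v ≠ 0) (a : ℝ) :
    (gaussianReal 0 v).real (Iic a) = stdNormalCDF (a / √v) := by
  have hsqrt : 0 < √(v : ℝ) := Real.sqrt_pos.2 (by positivity)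
  have hmap : (gaussianReal 0 1).map (√(v : ℝ) * ·) = gaussianReal 0 v := by
    rw [gaussianReal_map_const_mul, mul_zero, mul_one]
    congr
    exact Real.sq_sqrt v.2
  rw [← hmap, map_measureReal_apply (measurable_const_mul _) measurableSet_Iic,
    stdNormalCDF_eq_measureReal]
  congr 1
  ext x
  simp [le_div_iff₀' hsqrt]

theorem integral_stdNormalCDF_sub_gaussianReal (v : ℝ≥0) (a : ℝ) :
    ∫ u, stdNormalCDF (a - u) ∂gaussianReal 0 v = stdNormalCDF (a / √(1 + v)) := by
  have hanti : Antitone fun u => gaussianReal 0 1 (Iic (a - u)) := fun u u' h =>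
    measure_mono (Iic_subset_Iic.2 (by linarith))
  have hconv : ∫⁻ u, gaussianReal 0 1 (Iic (a - u)) ∂gaussianReal 0 v
      = (gaussianReal 0 v ∗ gaussianReal 0 1) (Iic a) := by
    rw [Measure.conv, Measure.map_apply measurable_add measurableSet_Iic,
      Measure.prod_apply (measurable_add measurableSet_Iic)]
    congr with u
    congr with z
    simp [le_sub_iff_add_le']
  calc ∫ u, stdNormalCDF (a - u) ∂gaussianReal 0 v
      = (∫⁻ u, gaussianReal 0 1 (Iic (a - u)) ∂gaussianReal 0 v).toReal := by
        rw [← integral_toReal hanti.measurable.aemeasurable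
          (ae_of_all _ fun _ => measure_lt_top _ _)]
        simp only [stdNormalCDF_eq_measureReal, measureReal_def]
    _ = (gaussianReal 0 (1 + v)).real (Iic a) := by
        rw [hconv, gaussianReal_conv_gaussianReal, add_zero, add_comm, measureReal_def]
    _ = stdNormalCDF (a / √(1 + v)) := by
        rw [gaussianReal_measureReal_Iic (by simp)]
        norm_cast

theorem integral_stdNormalCDF_add_mul_gaussianReal (v : ℝ≥0) (a b : ℝ) :
    ∫ w, stdNormalCDF (a + b * w) ∂gaussianReal 0 v = stdNormalCDF (a / √(1 + b ^ 2 * v)) := by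
  calc ∫ w, stdNormalCDF (a + b * w) ∂gaussianReal 0 v
      = ∫ w, stdNormalCDF (a - w) ∂(gaussianReal 0 v).map (-b * ·) := by
        rw [integral_map (by fun_prop)
          (by fun_prop : Measurable fun w => stdNormalCDF (a - w)).aestronglyMeasurable]
        simp only [neg_mul, sub_neg_eq_add]
    _ = stdNormalCDF (a / √(1 + b ^ 2 * v)) := by
        rw [gaussianReal_map_const_mul, mul_zero, integral_stdNormalCDF_sub_gaussianReal]
        push_cast
        rw [neg_sq]

theorem condExp_prod_ae_eq_integral_of_indepFun {α β Ω F : Type*} [MeasurableSpace Ω]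
    [StandardBorelSpace Ω] [Nonempty Ω] [NormedAddCommGroup F] [NormedSpace ℝ F] [CompleteSpace F]
    {mα : MeasurableSpace α} {μ : Measure α} [IsFiniteMeasure μ] {mβ : MeasurableSpace β}
    {X : α → β} {Y : α → Ω} {f : β × Ω → F} (hX : Measurable X) (hY : AEMeasurable Y μ)
    (hXY : IndepFun X Y μ) (hf : StronglyMeasurable f)
    (hf_int : Integrable (fun a => f (X a, Y a)) μ) :
    μ[fun a => f (X a, Y a) | mβ.comap X] =ᵐ[μ] fun a => ∫ y, f (X a, y) ∂μ.map Y := by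
  have hκ : condDistrib Y X μ =ᵐ[μ.map X] Kernel.const β (μ.map Y) := by
    refine condDistrib_ae_eq_of_measure_eq_compProd X hY ?_
    rw [Measure.compProd_const]
    exact (indepFun_iff_map_prod_eq_prod_map_map hX.aemeasurable hY).mp hXY
  filter_upwards [condExp_prod_ae_eq_integral_condDistrib hX hY hf hf_int,
    ae_of_ae_map hX.aemeasurable hκ] with a hcond hconst
  rw [hcond, hconst, Kernel.const_apply]

theorem probit_condexp_bivariate_general {Ω : Type*} [MeasurableSpace Ω]
    (P : Measure Ω) [IsProbabilityMeasure P]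
    (X₁ W : Ω → ℝ) (hX₁ : Measurable X₁) (hW : Measurable W)
    (μ₁ μ₂ σ₁ σ₂ ρ : ℝ)
    (hindep : IndepFun X₁ W P)
    (vW : ℝ≥0) (hvW : (vW : ℝ) = (1 - ρ ^ 2) * σ₂ ^ 2)
    (hWdist : P.map W = gaussianReal 0 vW)
    (X₂ : Ω → ℝ) (hX₂ : ∀ ω, X₂ ω = μ₂ + ρ * (σ₂ / σ₁) * (X₁ ω - μ₁) + W ω)
    (β₀ β₁ β₂ : ℝ) :
    ∀ᵐ ω ∂P,
      (P[fun ω => stdNormalCDF (β₀ + β₁ * X₁ ω + β₂ * X₂ ω) |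
          MeasurableSpace.comap X₁ inferInstance]) ω =
        stdNormalCDF (((β₀ + β₂ * μ₂ - β₂ * ρ * (σ₂ / σ₁) * μ₁)
            + (β₁ + β₂ * ρ * σ₂ / σ₁) * X₁ ω) /
          Real.sqrt (1 + β₂ ^ 2 * (1 - ρ ^ 2) * σ₂ ^ 2)) := by
  set α₀ := β₀ + β₂ * μ₂ - β₂ * ρ * (σ₂ / σ₁) * μ₁
  set α₁ := β₁ + β₂ * ρ * σ₂ / σ₁
  set f : ℝ × ℝ → ℝ := fun p => stdNormalCDF (α₀ + α₁ * p.1 + β₂ * p.2)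
  have hf : Measurable f := by fun_prop
  have hfX : (fun ω => stdNormalCDF (β₀ + β₁ * X₁ ω + β₂ * X₂ ω)) = fun ω => f (X₁ ω, W ω) := by
    funext ω
    simp only [f, α₀, α₁, hX₂]
    congr 1
    ring
  have hf_int : Integrable (fun ω => f (X₁ ω, W ω)) P :=
    .of_bound (hf.comp (hX₁.prodMk hW)).aestronglyMeasurable 1
      (ae_of_all _ fun _ => abs_stdNormalCDF_le_one _)
  filter_upwards [condExp_prod_ae_eq_integral_of_indepFun hX₁ hW.aemeasurable hindep
    hf.stronglyMeasurable hf_int] with ω hω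
  rw [hfX, hω, hWdist]
  dsimp only [f]
  rw [integral_stdNormalCDF_add_mul_gaussianReal, hvW, ← mul_assoc]

/-- Two-dimensional instance of Theorem 1: with `X₁ ~ N(μ₁, σ₁²)`, `σ₁ > 0`,
`W ~ N(0, (1−ρ²)σ₂²)` independent of `X₁`, and
`X₂ = μ₂ + ρ (σ₂/σ₁)(X₁ − μ₁) + W` (so that `(X₁, X₂)` is bivariate Gaussian with
correlation `ρ`), for all `β₀ β₁ β₂` a.s.
`E[Φ(β₀ + β₁X₁ + β₂X₂)|σ(X₁)] = Φ((α₀ + α₁X₁)/√(1 + β₂²(1−ρ²)σ₂²))` where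
`α₀ = β₀ + β₂μ₂ − β₂ρ(σ₂/σ₁)μ₁` and `α₁ = β₁ + β₂ρσ₂/σ₁`. -/
theorem probit_condexp_bivariate {Ω : Type*} [MeasurableSpace Ω]
    (P : Measure Ω) [IsProbabilityMeasure P]
    (X₁ W : Ω → ℝ) (hX₁ : Measurable X₁) (hW : Measurable W)
    (μ₁ μ₂ σ₁ σ₂ ρ : ℝ) (hσ₁ : 0 < σ₁) (hσ₂ : 0 ≤ σ₂)
    (hρ : ρ ∈ Set.Icc (-1 : ℝ) 1)
    (v₁ : ℝ≥0) (hv₁ : (v₁ : ℝ) = σ₁ ^ 2)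
    (hX₁dist : P.map X₁ = gaussianReal μ₁ v₁)
    (hindep : IndepFun X₁ W P)
    (vW : ℝ≥0) (hvW : (vW : ℝ) = (1 - ρ ^ 2) * σ₂ ^ 2) (hvWpos : 0 < vW)
    (hWdist : P.map W = gaussianReal 0 vW)
    (X₂ : Ω → ℝ) (hX₂ : ∀ ω, X₂ ω = μ₂ + ρ * (σ₂ / σ₁) * (X₁ ω - μ₁) + W ω)
    (β₀ β₁ β₂ : ℝ) :
    ∀ᵐ ω ∂P,
      (P[fun ω => stdNormalCDF (β₀ + β₁ * X₁ ω + β₂ * X₂ ω) |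
          MeasurableSpace.comap X₁ inferInstance]) ω =
        stdNormalCDF (((β₀ + β₂ * μ₂ - β₂ * ρ * (σ₂ / σ₁) * μ₁)
            + (β₁ + β₂ * ρ * σ₂ / σ₁) * X₁ ω) /
          Real.sqrt (1 + β₂ ^ 2 * (1 - ρ ^ 2) * σ₂ ^ 2)) :=
  probit_condexp_bivariate_general P X₁ W hX₁ hW μ₁ μ₂ σ₁ σ₂ ρ hindep vW hvW hWdist X₂ hX₂ β₀ β₁ β₂
end
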